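/- Let λ be regular uncountable, f, π ∈ Sym(λ), and let (δ_i)_{i<λ} be a strictly increasing sequence of ordinals cofinal in λ such that π restricted to each interval [δ_i, δ_{i+1}) is a bijection of that interval, and f restricted to each δ_i is a bijection of δ_i. Suppose for each odd i there is ξ_i ∈ [δ_i, δ_{i+1}) with f(ξ_i) ≠ π(ξ_i). Then, setting A' := {ξ_i : i odd}, the sets f[A'] and π[A'] are disjoint, and |A'| = λ. -/

import Mathlib

open Set Cardinal

/-- An ordinal is odd if it is of the form `d + 2n + 1` with `d` zero or a
limit ordinal and `n ∈ ω`. -/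
def IsOddOrd (i : Ordinal) : Prop :=
  ∃ d : Ordinal, ∃ n : ℕ, (d = 0 ∨ Order.IsSuccLimit d) ∧ i = d + (2 * n + 1)

/-- (Lemma 4.5.) If `π` permutes each interval `[δ_i, δ_{i+1})`, `f` permutes
each `δ_i`, and for each odd `i` there is `ξ_i ∈ [δ_i, δ_{i+1})` with
`f(ξ_i) ≠ π(ξ_i)`, then `A' = {ξ_i : i odd}` has size `λ` and
`f[A'] ∩ π[A'] = ∅`. -/
theorem spoil_disjoint_images (κ : Cardinal.{0}) (hreg : κ.IsRegular)
    (hunc : ℵ₀ < κ)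
    (f π : Ordinal → Ordinal)
    (hfsym : BijOn f (Iio κ.ord) (Iio κ.ord))
    (hπsym : BijOn π (Iio κ.ord) (Iio κ.ord))
    (δ : Ordinal → Ordinal)
    (hmono : StrictMonoOn δ (Iio κ.ord))
    (hlt : ∀ i < κ.ord, δ i < κ.ord)
    (hcof : ∀ a < κ.ord, ∃ i < κ.ord, a ≤ δ i)
    (hπint : ∀ i < κ.ord, BijOn π (Ico (δ i) (δ (i + 1))) (Ico (δ i) (δ (i + 1))))
    (hfinit : ∀ i < κ.ord, BijOn f (Iio (δ i)) (Iio (δ i)))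
    (ξ : Ordinal → Ordinal)
    (hξ : ∀ i < κ.ord, IsOddOrd i → ξ i ∈ Ico (δ i) (δ (i + 1)) ∧ f (ξ i) ≠ π (ξ i)) :
    Disjoint (f '' (ξ '' {i | i < κ.ord ∧ IsOddOrd i}))
             (π '' (ξ '' {i | i < κ.ord ∧ IsOddOrd i})) ∧
    #(↥(ξ '' {i | i < κ.ord ∧ IsOddOrd i})) = Cardinal.lift.{1} κ := by
  have hκ0 : ℵ₀ ≤ κ := hunc.le
  have hord : Order.IsSuccLimit κ.ord := Cardinal.isSuccLimit_ord hκ0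
  set S : Set Ordinal := {i | i < κ.ord ∧ IsOddOrd i} with hS
  -- i < κ.ord → i + 1 < κ.ord
  have hsucc : ∀ i < κ.ord, i + 1 < κ.ord := by
    intro i hi
    simpa using hord.succ_lt hi
  -- ξ i ∈ [δ i, δ (i+1)) for i ∈ S
  have hξmem : ∀ i ∈ S, ξ i ∈ Ico (δ i) (δ (i + 1)) := fun i hi => (hξ i hi.1 hi.2).1
  have hξlt : ∀ i ∈ S, ξ i < κ.ord := fun i hi =>
    (hξmem i hi).2.trans (hlt _ (hsucc i hi.1))
  -- monotonicity across intervals: i < j in S ⇒ δ (i+1) ≤ δ j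
  have hle : ∀ i ∈ S, ∀ j ∈ S, i < j → δ (i + 1) ≤ δ j := by
    intro i hi j hj hij
    rcases eq_or_lt_of_le (Order.add_one_le_of_lt hij) with h | h
    · exact le_of_eq (congrArg δ h)
    · exact (hmono (hsucc i hi.1) hj.1 h).le
  -- f maps below δ j stays below δ j; f at or above δ i stays at or above δ i
  have hfbelow : ∀ j < κ.ord, ∀ x, x < δ j → f x < δ j := fun j hj x hx =>
    (hfinit j hj).mapsTo hx
  have hfabove : ∀ i ∈ S, δ i ≤ f (ξ i) := by
    intro i hi
    by_contra h
    push_neg at h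
    obtain ⟨y, hy, hyx⟩ := (hfinit i hi.1).surjOn h
    have : y = ξ i := hfsym.injOn (hy.trans (hlt i hi.1)) (hξlt i hi) hyx
    exact absurd ((hξmem i hi).1.trans_lt (this ▸ hy)) (lt_irrefl _)
  have hπmem : ∀ i ∈ S, π (ξ i) ∈ Ico (δ i) (δ (i + 1)) := by
    intro i hi
    exact (hπint i hi.1).mapsTo (hξmem i hi)
  constructor
  · rw [Set.disjoint_left]
    rintro a ⟨x, ⟨i, hi, rfl⟩, rfl⟩ ⟨y, ⟨j, hj, rfl⟩, hyeq⟩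
    rcases lt_trichotomy i j with h | h | h
    · -- f (ξ i) < δ j ≤ π (ξ j)
      have h1 : ξ i < δ j := (hξmem i hi).2.trans_le (hle i hi j hj h)
      have h2 : f (ξ i) < δ j := hfbelow j hj.1 _ h1
      have h3 : δ j ≤ π (ξ j) := (hπmem j hj).1
      exact absurd (h2.trans_le (h3.trans_eq hyeq)) (lt_irrefl _)
    · subst h
      exact (hξ i hi.1 hi.2).2 hyeq.symm
    · -- π (ξ j) < δ (j+1) ≤ δ i ≤ f (ξ i)
      have h1 : π (ξ j) < δ i := (hπmem j hj).2.trans_le (hle j hj i hi h)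
      have h2 : δ i ≤ f (ξ i) := hfabove i hi
      rw [hyeq] at h1
      exact absurd (h1.trans_le h2) (lt_irrefl _)
  · -- cardinality
    have hinj : Set.InjOn ξ S := by
      intro i hi j hj hij
      by_contra hne
      rcases lt_or_gt_of_ne hne with h | h
      · have : ξ i < ξ j := ((hξmem i hi).2.trans_le (hle i hi j hj h)).trans_le (hξmem j hj).1
        exact absurd hij this.ne
      · have : ξ j < ξ i := ((hξmem j hj).2.trans_le (hle j hj i hi h)).trans_le (hξmem i hi).1
        exact absurd hij this.ne'
    rw [Cardinal.mk_image_eq_of_injOn _ _ hinj]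
    apply le_antisymm
    · calc #S ≤ #(Iio κ.ord) := Cardinal.mk_le_mk_of_subset (fun i hi => hi.1)
        _ = Cardinal.lift.{1} κ := by rw [Ordinal.mk_Iio_ordinal, Cardinal.card_ord]
    · have : Cardinal.lift.{1} κ = #(Iio κ.ord) := by
        rw [Ordinal.mk_Iio_ordinal, Cardinal.card_ord]
      rw [this]
      -- inject Iio κ.ord into S by a ↦ ω * a + 1
      have hmem : ∀ a : Iio κ.ord, (Ordinal.omega0 * a.1 + 1) ∈ S := by
        rintro ⟨a, ha⟩
        constructor
        · rw [Cardinal.lt_ord, Ordinal.card_add, Ordinal.card_mul, Ordinal.card_one,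
            Ordinal.card_omega0]
          have h1 : a.card < κ := Cardinal.lt_ord.1 ha
          exact Cardinal.add_lt_of_lt hκ0
            (Cardinal.mul_lt_of_lt hκ0 hunc h1) (Cardinal.one_lt_aleph0.trans hunc)
        · refine ⟨Ordinal.omega0 * a, 0, ?_, by norm_num⟩
          rcases eq_or_ne a 0 with rfl | h
          · left; simp
          · right
            exact Ordinal.isSuccLimit_mul_left Ordinal.isSuccLimit_omega0
              (pos_iff_ne_zero.2 h)
      refine Cardinal.mk_le_of_injective (f := fun a : Iio κ.ord =>
        (⟨Ordinal.omega0 * a.1 + 1, hmem a⟩ : S)) ?_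
      rintro ⟨a, ha⟩ ⟨b, hb⟩ hab
      simp only [Subtype.mk.injEq] at hab ⊢
      rw [Ordinal.add_one_eq_succ, Ordinal.add_one_eq_succ] at hab
      have := Order.succ_injective hab
      rcases lt_trichotomy a b with h | h | h
      · exact absurd this ((mul_lt_mul_iff_right₀ Ordinal.omega0_pos).2 h).ne
      · exact h
      · exact absurd this ((mul_lt_mul_iff_right₀ Ordinal.omega0_pos).2 h).ne'
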